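/- The cyclic group Z_3 is not a 3CI-group: there exist two isomorphic 3-Cayley graphs Γ = Cay(Z_3, S_{i,j}) with S_{i,i} = ∅ and S_{i,j} = {0} for i ≠ j, and Σ = Cay(Z_3, T_{i,j}) with T_{i,i} = {1,2} and T_{i,j} = ∅ for i ≠ j (both being disjoint unions of three 3-cycles), such that no element of the normalizer of R(Z_3) in Sym(V) maps Γ to Σ. -/

import Mathlib

/-- Right multiplication permutation `R(g) : x_i ↦ (xg)_i` on `V = Fin m × G`. -/
def Rperm (m : ℕ) {G : Type*} [Group G] (g : G) : Equiv.Perm (Fin m × G) where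
  toFun v := (v.1, v.2 * g)
  invFun v := (v.1, v.2 * g⁻¹)
  left_inv v := by simp
  right_inv v := by simp

/-- The subgroup `R(G) = {R(g) : g ∈ G}` of `Sym(V)`. -/
def RG (m : ℕ) (G : Type*) [Group G] : Subgroup (Equiv.Perm (Fin m × G)) where
  carrier := {σ | ∃ g : G, σ = Rperm m g}
  one_mem' := ⟨1, Equiv.ext fun v => by simp [Rperm]⟩
  mul_mem' := by
    rintro _ _ ⟨g, rfl⟩ ⟨h, rfl⟩
    exact ⟨h * g, Equiv.ext fun v => by simp [Rperm, mul_assoc]⟩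
  inv_mem' := by
    rintro _ ⟨g, rfl⟩
    exact ⟨g⁻¹, Equiv.ext fun v => by
      simp [Rperm, Equiv.Perm.inv_def]⟩

/-- The arc relation of the `m`-Cayley digraph `Cay(G, S_{i,j})`: there is an arc
from `x_i` to `(sx)_j` for each `s ∈ S_{i,j}`. -/
def arcRel (m : ℕ) {G : Type*} [Group G] (S : Fin m → Fin m → Set G)
    (u v : Fin m × G) : Prop :=
  v.2 * u.2⁻¹ ∈ S u.1 v.1

/-- Connection sets of `Γ`: `S_{i,i} = ∅` and `S_{i,j} = {0}` for `i ≠ j`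
(written multiplicatively). -/
def S18 : Fin 3 → Fin 3 → Set (Multiplicative (ZMod 3)) :=
  fun i j => if i = j then ∅ else {1}

/-- Connection sets of `Σ`: `T_{i,i} = {1, 2}` and `T_{i,j} = ∅` for `i ≠ j`
(written multiplicatively). -/
def T18 : Fin 3 → Fin 3 → Set (Multiplicative (ZMod 3)) :=
  fun i j => if i = j then
      {Multiplicative.ofAdd (1 : ZMod 3), Multiplicative.ofAdd (2 : ZMod 3)}
    else ∅

/-!
Both graphs are three disjoint triangles: in `Γ` the triangles are `{(0, x), (1, x), (2, x)}`,
in `Σ` they are the fibres `{i} × ℤ₃`, so exchanging the two coordinates is an isomorphism.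
An element `n` of the normalizer of `R(G)` conjugates each `R(g)` into some `R(h)`, and `R(h)`
fixes first coordinates, so `n` maps each fibre into a fibre. If `n` also mapped `Γ` onto `Σ`,
each triangle of `Γ`, which meets every fibre, would be mapped into a single fibre; hence all
of `V` would be mapped into one fibre, contradicting the surjectivity of `n`.
-/

section Normalizer

variable {m : ℕ} {G : Type*} [Group G]

@[simp]
lemma Rperm_apply (g : G) (v : Fin m × G) : Rperm m g v = (v.1, v.2 * g) := rfl

lemma fst_apply_mul_eq_of_mem_normalizer {n : Equiv.Perm (Fin m × G)}
    (hn : n ∈ Subgroup.normalizer (RG m G : Set (Equiv.Perm (Fin m × G))))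
    (v : Fin m × G) (g : G) : (n (v.1, v.2 * g)).1 = (n v).1 := by
  obtain ⟨h, hh⟩ := (Subgroup.mem_normalizer_iff.mp hn (Rperm m g)).mp ⟨g, rfl⟩
  simpa only [Equiv.Perm.mul_apply, Equiv.Perm.coe_inv, Equiv.symm_apply_apply, Rperm_apply]
    using congrArg (fun σ => (σ (n v)).1) hh

lemma fst_apply_eq_of_mem_normalizer {n : Equiv.Perm (Fin m × G)}
    (hn : n ∈ Subgroup.normalizer (RG m G : Set (Equiv.Perm (Fin m × G))))
    (i : Fin m) (x y : G) : (n (i, x)).1 = (n (i, y)).1 := by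
  simpa using (fst_apply_mul_eq_of_mem_normalizer hn (i, x) (x⁻¹ * y)).symm

end Normalizer

lemma arcRel_S18_iff (u v : Fin 3 × Multiplicative (ZMod 3)) :
    arcRel 3 S18 u v ↔ u.1 ≠ v.1 ∧ u.2 = v.2 := by
  by_cases h : u.1 = v.1 <;> simp [arcRel, S18, h, mul_inv_eq_one, eq_comm]

lemma arcRel_T18_iff (u v : Fin 3 × Multiplicative (ZMod 3)) :
    arcRel 3 T18 u v ↔ u.1 = v.1 ∧ u.2 ≠ v.2 := by
  have hT : ∀ d : Multiplicative (ZMod 3),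
      d = Multiplicative.ofAdd 1 ∨ d = Multiplicative.ofAdd 2 ↔ d ≠ 1 := by decide
  by_cases h : u.1 = v.1 <;> simp [arcRel, T18, h, hT, mul_inv_eq_one, eq_comm]

/-- `ZMod 3` is `Fin 3` by definition, so the fibre index and the group element can be
exchanged. -/
def swapZ3 : Equiv.Perm (Fin 3 × Multiplicative (ZMod 3)) :=
  (Equiv.prodComm _ _).trans (Equiv.prodCongr Multiplicative.toAdd Multiplicative.ofAdd)

lemma arcRel_S18_iff_arcRel_T18_swapZ3 (u v : Fin 3 × Multiplicative (ZMod 3)) :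
    arcRel 3 S18 u v ↔ arcRel 3 T18 (swapZ3 u) (swapZ3 v) := by
  rw [arcRel_S18_iff, arcRel_T18_iff]
  exact and_comm

lemma fst_apply_eq_of_arcRel_S18_iff {n : Equiv.Perm (Fin 3 × Multiplicative (ZMod 3))}
    (hiso : ∀ u v, arcRel 3 S18 u v ↔ arcRel 3 T18 (n u) (n v))
    (i j : Fin 3) (x : Multiplicative (ZMod 3)) : (n (i, x)).1 = (n (j, x)).1 := by
  by_cases hij : i = j
  · rw [hij]
  · have harc : arcRel 3 S18 (i, x) (j, x) := (arcRel_S18_iff _ _).mpr ⟨hij, rfl⟩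
    exact ((arcRel_T18_iff _ _).mp ((hiso _ _).mp harc)).1

/-- `ℤ_3` is not a 3CI-group: the two 3-Cayley graphs
`Γ = Cay(ℤ_3, S18)` and `Σ = Cay(ℤ_3, T18)` (both disjoint unions of three
3-cycles) are isomorphic, yet no element of the normalizer of `R(ℤ_3)` in
`Sym(V)` maps `Γ` to `Σ`. -/
theorem Z3_not_3CI :
    (∃ e : Equiv.Perm (Fin 3 × Multiplicative (ZMod 3)),
      ∀ u v, arcRel 3 S18 u v ↔ arcRel 3 T18 (e u) (e v)) ∧
    ¬ ∃ n ∈ Subgroup.normalizer (RG 3 (Multiplicative (ZMod 3)) : Set (Equiv.Perm (Fin 3 × Multiplicative (ZMod 3)))),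
        ∀ u v, arcRel 3 S18 u v ↔ arcRel 3 T18 (n u) (n v) := by
  refine ⟨⟨swapZ3, arcRel_S18_iff_arcRel_T18_swapZ3⟩, ?_⟩
  rintro ⟨n, hn, hiso⟩
  have hconst : ∀ v, (n v).1 = (n (0, 1)).1 := fun ⟨i, x⟩ =>
    (fst_apply_eq_of_arcRel_S18_iff hiso i 0 x).trans (fst_apply_eq_of_mem_normalizer hn 0 x 1)
  have h01 := (hconst (n.symm (0, 1))).trans (hconst (n.symm (1, 1))).symm
  simp at h01
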